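/- Fix h ∈ ℂ with h ≠ 0, and let Ω = (1/h)R dt be an adapted family of connection 1-forms with R = (r_{α,β}). Let φ₀,…,φ_{N−2} : ℝ → ℂ be smooth functions satisfying, for all t ∈ ℝ and all 0 ≤ β ≤ N−2, h·φ_β′(t) = Σ_{α=0}^{N−2} r_{α,β}(eᵗ,h)·φ_α(t). Then: (i) φ_β(t) = Σ_{γ=0}^{β} σ_{β,γ}(eᵗ,h)·hᵞ·φ₀^{(γ)}(t) for every 0 ≤ β ≤ N−2; and (ii) φ₀ satisfies the reduced scalar ordinary differential equation h^{N−1}·φ₀^{(N−1)}(t) + Σ_{γ=0}^{N−2} σ_{N−1,γ}(eᵗ,h)·hᵞ·φ₀^{(γ)}(t) = 0 for all t. -/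

import Mathlib

open MvPolynomial Matrix Finset

noncomputable section

/-- `ℂ[q,h]`: variable `0` is `q`, variable `1` is `h`. -/
abbrev PQH : Type := MvPolynomial (Fin 2) ℂ

/-- weights: `deg q = 2(N-k)`, `deg h = 2`. -/
def wt (N k : ℕ) : Fin 2 → ℤ := ![2 * ((N : ℤ) - (k : ℤ)), 2]

/-- weighted-homogeneous of degree `d`. -/
def IsHom (N k : ℕ) (p : PQH) (d : ℤ) : Prop :=
  p.IsWeightedHomogeneous (wt N k) d

/-- substitution `q = 0`. -/
def q0 : PQH →ₐ[ℂ] PQH := aeval ![0, X 1]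

abbrev Mat (N : ℕ) := Matrix (Fin (N - 1)) (Fin (N - 1)) PQH

/-- the matrix `I₋₁`: entries `(i+1, i)` equal to `1`, all other entries `0`. -/
def Im1 (N : ℕ) : Mat N := fun i j => if (i : ℕ) = (j : ℕ) + 1 then 1 else 0

/-- adapted gauge transformation: entries weighted-homogeneous of degree `2(j-i)`,
and `U(0,h) = I`. -/
structure IsAdaptedGauge (N k : ℕ) (U : Mat N) : Prop where
  homog : ∀ i j, IsHom N k (U i j) (2 * ((j : ℤ) - (i : ℤ)))
  init : U.map ⇑q0 = 1

/-- adapted family of connection 1-forms `Ω = (1/h) R dt`, as a condition on `R`: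
entries weighted-homogeneous of degree `2(j-i)+2`, `R(0,h) = I₋₁`, and all
`(i+1,i)` entries equal to `1`. -/
structure IsAdaptedConn (N k : ℕ) (R : Mat N) : Prop where
  homog : ∀ i j, IsHom N k (R i j) (2 * ((j : ℤ) - (i : ℤ)) + 2)
  init : R.map ⇑q0 = Im1 N
  subdiag : ∀ i j : Fin (N - 1), (i : ℕ) = (j : ℕ) + 1 → R i j = 1

/-- `h⁻¹`-linear: the variable `h` does not occur in the entries of `R`. -/
def IsHinvLinear (N : ℕ) (R : Mat N) : Prop :=
  ∀ i j, ∀ m ∈ (R i j).support, m 1 = 0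

/-- the gauge action `U*Ω` on the level of the matrix `R`:
`R' = U⁻¹ R U + h q U⁻¹ (∂U/∂q)`. -/
def gaugeAct (N : ℕ) (U R : Mat N) : Mat N :=
  U⁻¹ * R * U + (X 1 * X 0 : PQH) • (U⁻¹ * U.map (fun p => pderiv 0 p))

/-- the derivation `D = q d/dq` of `ℂ[q,h]`, as a `ℂ`-linear endomorphism. -/
def Dop : Module.End ℂ PQH := (LinearMap.mulLeft ℂ (X 0 : PQH)) ∘ₗ (pderiv 0).toLinearMap

/-- multiplication by a polynomial, as a differential operator. -/
def mulOp (c : PQH) : Module.End ℂ PQH := LinearMap.mulLeft ℂ c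

/-- the operator `hD`. -/
def hD : Module.End ℂ PQH := mulOp (X 1) * Dop

/-- the operators attached to an adapted family `Ω = (1/h) R dt`: `P₀ = 1`,
`P_{β+1} = (hD)∘P_β − Σ_{α=0}^{β} r_{α,β}·P_α`; `Pops N R (N-1)` is the reduced
operator of `Ω`. -/
def Pops (N : ℕ) (R : Mat N) : ℕ → Module.End ℂ PQH
  | 0 => 1
  | β + 1 =>
      hD * Pops N R β -
        ∑ α : Fin (β + 1),
          (if h : (α : ℕ) < N - 1 ∧ β < N - 1 then
            mulOp (R ⟨α, h.1⟩ ⟨β, h.2⟩) * Pops N R α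
          else 0)
  termination_by β => β
  decreasing_by
  · exact Nat.lt_succ_self β
  · exact α.is_lt

/-- `σ_{β,γ}` attached to an adapted family `R`:
`σ_{0,0} = 1`, `σ_{β+1,γ} = σ_{β,γ−1} + q h ∂σ_{β,γ}/∂q − Σ_{α=γ}^{β} r_{α,β} σ_{α,γ}`,
with the conventions `σ_{β,γ} = 0` for `γ < 0` or `γ > β` (which this definition obeys). -/
def sigmaC (N : ℕ) (R : Mat N) : ℕ → ℕ → PQH
  | 0, 0 => 1
  | 0, _ + 1 => 0
  | β + 1, γ =>
      (match γ with
        | 0 => 0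
        | γ' + 1 => sigmaC N R β γ') +
      X 0 * X 1 * pderiv 0 (sigmaC N R β γ) -
      ∑ α : Fin (β + 1),
        (if h : γ ≤ (α : ℕ) ∧ (α : ℕ) < N - 1 ∧ β < N - 1 then
          R ⟨α, h.2.1⟩ ⟨β, h.2.2⟩ * sigmaC N R α γ
        else 0)
  termination_by β _ => β
  decreasing_by
  · exact Nat.lt_succ_self β
  · exact Nat.lt_succ_self β
  · exact α.is_lt

/-- the integers `λᵢᵏ` defined by `k ∏_{j=1}^{k-1} (kX+j) = Σᵢ λᵢᵏ Xⁱ`. -/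
def lam (k i : ℕ) : ℤ :=
  ((k : Polynomial ℤ) *
    ∏ j ∈ Finset.Icc 1 (k - 1),
      ((k : Polynomial ℤ) * Polynomial.X + (j : Polynomial ℤ))).coeff i

/-- the Picard–Fuchs operator
`P^{N,k} = (hD)^{N−1} − q (λ_{k−1}(hD)^{k−1} + λ_{k−2} h (hD)^{k−2} + ⋯ + λ₀ h^{k−1})`. -/
def PNK (N k : ℕ) : Module.End ℂ PQH :=
  hD ^ (N - 1) -
    ∑ i ∈ Finset.range k,
      mulOp (C ((lam k i : ℤ) : ℂ) * X 0 * X 1 ^ (k - 1 - i)) * hD ^ i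

lemma sigmaC_succ (N : ℕ) (R : Mat N) (β γ : ℕ) :
    sigmaC N R (β + 1) γ =
      (match γ with
        | 0 => 0
        | γ' + 1 => sigmaC N R β γ') +
      X 0 * X 1 * pderiv 0 (sigmaC N R β γ) -
      ∑ α : Fin (β + 1),
        (if h : γ ≤ (α : ℕ) ∧ (α : ℕ) < N - 1 ∧ β < N - 1 then
          R ⟨α, h.2.1⟩ ⟨β, h.2.2⟩ * sigmaC N R α γ
        else 0) := by
  rw [sigmaC.eq_def]

lemma sigmaC_zero_zero (N : ℕ) (R : Mat N) : sigmaC N R 0 0 = 1 := by rw [sigmaC.eq_def]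

lemma sigmaC_zero_succ (N : ℕ) (R : Mat N) (γ : ℕ) : sigmaC N R 0 (γ + 1) = 0 := by
  rw [sigmaC.eq_def]

lemma sigmaC_zero_of_lt (N : ℕ) (R : Mat N) : ∀ β γ : ℕ, β < γ → sigmaC N R β γ = 0 := by
  intro β
  induction β with
  | zero => intro γ hγ; match γ, hγ with | γ'+1, _ => exact sigmaC_zero_succ N R γ'
  | succ β ih =>
    intro γ hγ
    rw [sigmaC_succ]
    have h1 : (match γ with | 0 => (0:PQH) | γ' + 1 => sigmaC N R β γ') = 0 := by
      match γ, hγ with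
      | γ'+1, hγ => exact ih γ' (by omega)
    have h2 : sigmaC N R β γ = 0 := ih γ (by omega)
    rw [h1, h2]
    have h3 : ∀ α : Fin (β + 1),
        (if h : γ ≤ (α : ℕ) ∧ (α : ℕ) < N - 1 ∧ β < N - 1 then
          R ⟨α, h.2.1⟩ ⟨β, h.2.2⟩ * sigmaC N R α γ else 0) = 0 := by
      intro α
      rw [dif_neg]
      rintro ⟨h4, -⟩
      omega
    rw [Finset.sum_congr rfl (fun α _ => h3 α), Finset.sum_const_zero]
    simp

lemma sigmaC_diag (N : ℕ) (R : Mat N) : ∀ β : ℕ, sigmaC N R β β = 1 := by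
  intro β
  induction β with
  | zero => exact sigmaC_zero_zero N R
  | succ β ih =>
    rw [sigmaC_succ]
    have h0 : (match β + 1 with | 0 => (0:PQH) | γ' + 1 => sigmaC N R β γ') = sigmaC N R β β := rfl
    rw [h0, ih, sigmaC_zero_of_lt N R β (β+1) (by omega)]
    have h3 : ∀ α : Fin (β + 1),
        (if h : β + 1 ≤ (α : ℕ) ∧ (α : ℕ) < N - 1 ∧ β < N - 1 then
          R ⟨α, h.2.1⟩ ⟨β, h.2.2⟩ * sigmaC N R α (β+1) else 0) = 0 := by
      intro α
      rw [dif_neg]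
      rintro ⟨h4, -⟩
      omega
    rw [Finset.sum_congr rfl (fun α _ => h3 α), Finset.sum_const_zero]
    simp

lemma R_eq_zero_of_gt (N k : ℕ) (hNk : k < N) (R : Mat N) (hR : IsAdaptedConn N k R)
    (i j : Fin (N - 1)) (hij : (j : ℕ) + 1 < (i : ℕ)) : R i j = 0 := by
  have hd : 2 * ((j : ℤ) - (i : ℤ)) + 2 < 0 := by
    have : (j : ℤ) + 1 < (i : ℤ) := by exact_mod_cast hij
    omega
  have hhom := hR.homog i j
  ext m
  rw [coeff_zero]
  by_contra hc
  have := hhom hc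
  have hnn : (0 : ℤ) ≤ Finsupp.weight (wt N k) m := by
    rw [Finsupp.weight_apply, Finsupp.sum]
    apply Finset.sum_nonneg
    intro x _
    have hw : 0 ≤ wt N k x := by
      fin_cases x <;> simp [wt] <;> omega
    exact smul_nonneg (by positivity) hw
  omega

lemma ev_hasDerivAt (h : ℂ) (p : PQH) (t : ℝ) :
    HasDerivAt (fun s : ℝ => eval ![Complex.exp s, h] p)
      (eval ![Complex.exp t, h] (X 0 * pderiv 0 p)) t := by
  induction p using MvPolynomial.induction_on with
  | C a => simpa using hasDerivAt_const t a
  | add p q hp hq =>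
    have := hp.fun_add hq
    simpa [mul_add] using this
  | mul_X p i hp =>
    fin_cases i
    · show HasDerivAt (fun s : ℝ => eval ![Complex.exp s, h] (p * X 0))
        (eval ![Complex.exp t, h] (X 0 * pderiv 0 (p * X 0))) t
      have hexp : HasDerivAt (fun s : ℝ => Complex.exp s) (Complex.exp t) t :=
        (Complex.hasDerivAt_exp (t : ℂ)).comp_ofReal
      have := hp.fun_mul hexp
      have heq : eval ![Complex.exp t, h] (X 0 * pderiv 0 (p * X 0)) =
          eval ![Complex.exp ↑t, h] (X 0 * (pderiv 0) p) * Complex.exp ↑t +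
            eval ![Complex.exp ↑t, h] p * Complex.exp ↑t := by
        simp [pderiv_mul]
        ring
      rw [heq]
      simpa using this
    · show HasDerivAt (fun s : ℝ => eval ![Complex.exp s, h] (p * X 1))
        (eval ![Complex.exp t, h] (X 0 * pderiv 0 (p * X 1))) t
      have := hp.mul_const h
      have heq : eval ![Complex.exp t, h] (X 0 * pderiv 0 (p * X 1)) =
          eval ![Complex.exp ↑t, h] (X 0 * (pderiv 0) p) * h := by
        simp [pderiv_mul]
        ring
      rw [heq]
      simpa using this

/-- evaluation at `q = eᵗ`. -/
def evP (h : ℂ) (p : PQH) (t : ℝ) : ℂ := eval ![Complex.exp t, h] p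

/-- totalization of `φ`. -/
def phiN (N : ℕ) (φ : Fin (N - 1) → ℝ → ℂ) : ℕ → ℝ → ℂ :=
  fun a => if ha : a < N - 1 then φ ⟨a, ha⟩ else 0

/-- totalization of `R`. -/
def RN (N : ℕ) (R : Mat N) : ℕ → ℕ → PQH :=
  fun a b => if hab : a < N - 1 ∧ b < N - 1 then R ⟨a, hab.1⟩ ⟨b, hab.2⟩ else 0

lemma phiN_lt {N : ℕ} (φ : Fin (N - 1) → ℝ → ℂ) {a : ℕ} (ha : a < N - 1) :
    phiN N φ a = φ ⟨a, ha⟩ := dif_pos ha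

lemma phiN_ge {N : ℕ} (φ : Fin (N - 1) → ℝ → ℂ) {a : ℕ} (ha : ¬ a < N - 1) :
    phiN N φ a = 0 := dif_neg ha

lemma RN_eq {N : ℕ} (R : Mat N) {a b : ℕ} (ha : a < N - 1) (hb : b < N - 1) :
    RN N R a b = R ⟨a, ha⟩ ⟨b, hb⟩ := dif_pos ⟨ha, hb⟩

lemma RN_zero {N k : ℕ} (hNk : k < N) {R : Mat N} (hR : IsAdaptedConn N k R) {a b : ℕ}
    (hab : b + 1 < a) : RN N R a b = 0 := by
  unfold RN
  split
  · next hc => exact R_eq_zero_of_gt N k hNk R hR _ _ hab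
  · rfl

lemma ode_range {N k : ℕ} (hNk : k < N) {R : Mat N} (hR : IsAdaptedConn N k R) {h : ℂ}
    {φ : Fin (N - 1) → ℝ → ℂ}
    (hode : ∀ (t : ℝ) (β : Fin (N - 1)),
      h * deriv (φ β) t =
        ∑ α : Fin (N - 1), eval ![Complex.exp t, h] (R α β) * φ α t)
    {b : ℕ} (hb : b < N - 1) (t : ℝ) :
    h * deriv (phiN N φ b) t =
      (∑ a ∈ Finset.range (b + 1), evP h (RN N R a b) t * phiN N φ a t) +
        phiN N φ (b + 1) t := by
  rw [phiN_lt φ hb]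
  rw [hode t ⟨b, hb⟩]
  have hconv : ∑ α : Fin (N - 1), eval ![Complex.exp t, h] (R α ⟨b, hb⟩) * φ α t =
      ∑ a ∈ Finset.range (N - 1), evP h (RN N R a b) t * phiN N φ a t := by
    rw [← Fin.sum_univ_eq_sum_range (fun a => evP h (RN N R a b) t * phiN N φ a t) (N - 1)]
    apply Finset.sum_congr rfl
    intro α _
    rw [RN_eq R α.isLt hb, phiN_lt φ α.isLt]
    rfl
  rw [hconv]
  by_cases hb1 : b + 1 < N - 1
  · have hsplit : N - 1 = (b + 2) + (N - 1 - (b + 2)) := by omega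
    rw [hsplit, Finset.sum_range_add]
    have hz : ∀ i ∈ Finset.range (N - 1 - (b + 2)),
        evP h (RN N R (b + 2 + i) b) t * phiN N φ (b + 2 + i) t = 0 := by
      intro i _
      rw [RN_zero hNk hR (by omega)]
      simp [evP]
    rw [Finset.sum_congr rfl hz, Finset.sum_const_zero, add_zero, Finset.sum_range_succ]
    have h1 : RN N R (b + 1) b = 1 := by
      rw [RN_eq R hb1 hb]
      exact hR.subdiag _ _ rfl
    rw [h1, phiN_lt φ hb1]
    simp [evP]
  · have hb1' : b + 1 = N - 1 := by omega
    rw [phiN_ge φ (by omega), hb1']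
    simp

lemma sigmaC_succ_range {N : ℕ} (R : Mat N) {c : ℕ} (hc : c < N - 1) (γ : ℕ) :
    sigmaC N R (c + 1) γ =
      (match γ with | 0 => 0 | γ' + 1 => sigmaC N R c γ') +
      X 0 * X 1 * pderiv 0 (sigmaC N R c γ) -
      ∑ a ∈ Finset.range (c + 1), RN N R a c * sigmaC N R a γ := by
  rw [sigmaC_succ]
  congr 1
  rw [← Fin.sum_univ_eq_sum_range (fun a => RN N R a c * sigmaC N R a γ) (c + 1)]
  apply Finset.sum_congr rfl
  intro α _
  have hα : (α : ℕ) < N - 1 := by omega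
  by_cases hγα : γ ≤ (α : ℕ)
  · rw [dif_pos ⟨hγα, hα, hc⟩, RN_eq R hα hc]
  · rw [dif_neg (by tauto), sigmaC_zero_of_lt N R _ _ (by omega), mul_zero]

lemma key_lemma (N k : ℕ) (hk : 2 ≤ k) (hNk : k < N)
    (R : Mat N) (hR : IsAdaptedConn N k R) (h : ℂ)
    (φ : Fin (N - 1) → ℝ → ℂ)
    (hsmooth : ∀ β : Fin (N - 1), ∀ n : ℕ, ContDiff ℝ n (φ β))
    (hode : ∀ (t : ℝ) (β : Fin (N - 1)),
      h * deriv (φ β) t =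
        ∑ α : Fin (N - 1), eval ![Complex.exp t, h] (R α β) * φ α t) :
    ∀ b ≤ N - 1, ∀ t : ℝ,
      phiN N φ b t =
        ∑ γ ∈ Finset.range (b + 1),
          evP h (sigmaC N R b γ) t * h ^ γ * iteratedDeriv γ (phiN N φ 0) t := by
  have h0lt : 0 < N - 1 := by omega
  -- smoothness of φ₀
  have hD : ∀ (γ : ℕ) (t : ℝ), HasDerivAt (iteratedDeriv γ (phiN N φ 0))
      (iteratedDeriv (γ + 1) (phiN N φ 0) t) t := by
    intro γ t
    rw [iteratedDeriv_succ]
    have hcd : ContDiff ℝ (γ + 1 : ℕ) (phiN N φ 0) := by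
      rw [phiN_lt φ h0lt]; exact hsmooth _ _
    have hdiff : Differentiable ℝ (iteratedDeriv γ (phiN N φ 0)) :=
      hcd.differentiable_iteratedDeriv γ (by exact_mod_cast Nat.lt_succ_self γ)
    exact (hdiff t).hasDerivAt
  intro b
  induction b using Nat.strong_induction_on with
  | _ b ih =>
    match b with
    | 0 =>
      intro _ t
      simp [sigmaC_zero_zero, evP, iteratedDeriv_zero]
    | c + 1 =>
      intro hb t
      have hc : c < N - 1 := by omega
      -- step 1: express φ_{c+1} from the ODE
      have hstep : phiN N φ (c + 1) t =
          h * deriv (phiN N φ c) t -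
            ∑ a ∈ Finset.range (c + 1), evP h (RN N R a c) t * phiN N φ a t := by
        have := ode_range hNk hR hode hc t
        linear_combination -this
      -- step 2: compute the derivative of φ_c via the IH
      have hder : HasDerivAt (phiN N φ c)
          (∑ γ ∈ Finset.range (c + 1),
            (evP h (X 0 * pderiv 0 (sigmaC N R c γ)) t * h ^ γ *
                iteratedDeriv γ (phiN N φ 0) t +
              evP h (sigmaC N R c γ) t * h ^ γ *
                iteratedDeriv (γ + 1) (phiN N φ 0) t)) t := by
        have hfun : phiN N φ c = fun s =>
            ∑ γ ∈ Finset.range (c + 1),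
              evP h (sigmaC N R c γ) s * h ^ γ * iteratedDeriv γ (phiN N φ 0) s :=
          funext (ih c (by omega) (by omega))
        rw [hfun]
        apply HasDerivAt.fun_sum
        intro γ _
        have h1 : HasDerivAt (fun s => evP h (sigmaC N R c γ) s * h ^ γ)
            (evP h (X 0 * pderiv 0 (sigmaC N R c γ)) t * h ^ γ) t :=
          (ev_hasDerivAt h _ t).mul_const _
        exact h1.mul (hD γ t)
      have hderiv : deriv (phiN N φ c) t = _ := hder.deriv
      -- step 3: rewrite the a-sum via the IH
      have hsub : ∑ a ∈ Finset.range (c + 1), evP h (RN N R a c) t * phiN N φ a t =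
          ∑ γ ∈ Finset.range (c + 1),
            (∑ a ∈ Finset.range (c + 1), evP h (RN N R a c) t * evP h (sigmaC N R a γ) t) *
              h ^ γ * iteratedDeriv γ (phiN N φ 0) t := by
        have h1 : ∀ a ∈ Finset.range (c + 1),
            evP h (RN N R a c) t * phiN N φ a t =
              ∑ γ ∈ Finset.range (c + 1),
                evP h (RN N R a c) t * evP h (sigmaC N R a γ) t * h ^ γ *
                  iteratedDeriv γ (phiN N φ 0) t := by
          intro a ha
          rw [Finset.mem_range] at ha
          rw [ih a (by omega) (by omega) t]
          rw [Finset.mul_sum]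
          rw [← Finset.sum_subset (Finset.range_subset_range.mpr (by omega : a + 1 ≤ c + 1))]
          · apply Finset.sum_congr rfl
            intro γ _
            ring
          · intro γ _ hγ
            rw [Finset.mem_range] at hγ
            rw [sigmaC_zero_of_lt N R a γ (by omega)]
            simp [evP]
        rw [Finset.sum_congr rfl h1, Finset.sum_comm]
        apply Finset.sum_congr rfl
        intro γ _
        rw [Finset.sum_mul, Finset.sum_mul]
      -- step 4: expand the σ-recursion on the RHS
      have hRHS : ∑ γ ∈ Finset.range (c + 2),
            evP h (sigmaC N R (c + 1) γ) t * h ^ γ * iteratedDeriv γ (phiN N φ 0) t =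
          ∑ γ ∈ Finset.range (c + 1),
            (evP h (sigmaC N R c γ) t * h ^ (γ + 1) * iteratedDeriv (γ + 1) (phiN N φ 0) t +
              evP h (X 0 * X 1 * pderiv 0 (sigmaC N R c γ)) t * h ^ γ *
                iteratedDeriv γ (phiN N φ 0) t -
              (∑ a ∈ Finset.range (c + 1),
                  evP h (RN N R a c) t * evP h (sigmaC N R a γ) t) * h ^ γ *
                iteratedDeriv γ (phiN N φ 0) t) := by
        have hexp : ∀ γ, evP h (sigmaC N R (c + 1) γ) t =
            evP h (match γ with | 0 => 0 | γ' + 1 => sigmaC N R c γ') t +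
            evP h (X 0 * X 1 * pderiv 0 (sigmaC N R c γ)) t -
            ∑ a ∈ Finset.range (c + 1), evP h (RN N R a c) t * evP h (sigmaC N R a γ) t := by
          intro γ
          rw [sigmaC_succ_range R hc γ]
          simp only [evP, map_add, map_sub, map_sum, _root_.map_mul]
        calc ∑ γ ∈ Finset.range (c + 2),
              evP h (sigmaC N R (c + 1) γ) t * h ^ γ * iteratedDeriv γ (phiN N φ 0) t
            = ∑ γ ∈ Finset.range (c + 2),
                (evP h (match γ with | 0 => 0 | γ' + 1 => sigmaC N R c γ') t * h ^ γ *
                    iteratedDeriv γ (phiN N φ 0) t +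
                  evP h (X 0 * X 1 * pderiv 0 (sigmaC N R c γ)) t * h ^ γ *
                    iteratedDeriv γ (phiN N φ 0) t -
                  (∑ a ∈ Finset.range (c + 1),
                      evP h (RN N R a c) t * evP h (sigmaC N R a γ) t) * h ^ γ *
                    iteratedDeriv γ (phiN N φ 0) t) := by
              apply Finset.sum_congr rfl
              intro γ _
              rw [hexp γ]
              ring
          _ = _ := by
              rw [Finset.sum_sub_distrib, Finset.sum_add_distrib,
                Finset.sum_sub_distrib, Finset.sum_add_distrib]
              congr 1
              congr 1
              · -- shift term
                rw [Finset.sum_range_succ']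
                have hz : evP h (match 0 with | 0 => (0:PQH) | γ' + 1 => sigmaC N R c γ') t *
                    h ^ 0 * iteratedDeriv 0 (phiN N φ 0) t = 0 := by
                  simp [evP]
                rw [hz, add_zero]
              · -- q h ∂ term
                rw [Finset.sum_range_succ]
                rw [sigmaC_zero_of_lt N R c (c + 1) (by omega)]
                simp [evP]
              · -- subtracted sum
                rw [Finset.sum_range_succ]
                have hz : ∀ a ∈ Finset.range (c + 1),
                    evP h (RN N R a c) t * evP h (sigmaC N R a (c + 1)) t = 0 := by
                  intro a ha
                  rw [Finset.mem_range] at ha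
                  rw [sigmaC_zero_of_lt N R a (c + 1) (by omega)]
                  simp [evP]
                rw [Finset.sum_congr rfl hz, Finset.sum_const_zero]
                simp
      -- step 5: combine
      rw [hstep, hderiv, hsub, hRHS, Finset.mul_sum, ← Finset.sum_sub_distrib]
      apply Finset.sum_congr rfl
      intro γ _
      have hqh : evP h (X 0 * X 1 * pderiv 0 (sigmaC N R c γ)) t =
          h * evP h (X 0 * pderiv 0 (sigmaC N R c γ)) t := by
        simp only [evP, _root_.map_mul, eval_X]
        simp
        ring
      rw [hqh]
      ring

/-- **Reduction of an adapted system to a scalar o.d.e.**  Fix `h ≠ 0` and let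
`Ω = (1/h)R dt` be an adapted family of connection 1-forms.  If smooth functions
`φ₀,…,φ_{N−2}` satisfy `h φ_β′(t) = Σ_α r_{α,β}(eᵗ,h) φ_α(t)`, then
`φ_β = Σ_{γ≤β} σ_{β,γ}(eᵗ,h) hᵞ φ₀^{(γ)}` and `φ₀` satisfies the reduced equation
`h^{N−1} φ₀^{(N−1)} + Σ_{γ<N−1} σ_{N−1,γ}(eᵗ,h) hᵞ φ₀^{(γ)} = 0`. -/
theorem adapted_system_reduces_to_scalar_ode
    (N k : ℕ) (hk : 2 ≤ k) (hNk : k < N)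
    (R : Mat N) (hR : IsAdaptedConn N k R)
    (h : ℂ) (hh : h ≠ 0)
    (φ : Fin (N - 1) → ℝ → ℂ)
    (hsmooth : ∀ β : Fin (N - 1), ∀ n : ℕ, ContDiff ℝ n (φ β))
    (hode : ∀ (t : ℝ) (β : Fin (N - 1)),
      h * deriv (φ β) t =
        ∑ α : Fin (N - 1),
          eval ![Complex.exp t, h] (R α β) * φ α t) :
    (∀ (t : ℝ) (β : Fin (N - 1)),
      φ β t =
        ∑ γ ∈ Finset.range ((β : ℕ) + 1),
          eval ![Complex.exp t, h] (sigmaC N R β γ) * h ^ γ *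
            iteratedDeriv γ (φ ⟨0, by omega⟩) t) ∧
    (∀ t : ℝ,
      h ^ (N - 1) * iteratedDeriv (N - 1) (φ ⟨0, by omega⟩) t +
        ∑ γ ∈ Finset.range (N - 1),
          eval ![Complex.exp t, h] (sigmaC N R (N - 1) γ) * h ^ γ *
            iteratedDeriv γ (φ ⟨0, by omega⟩) t = 0) := by
  have h0lt : 0 < N - 1 := by omega
  have hkeyall := key_lemma N k hk hNk R hR h φ hsmooth hode
  have hphi0 : phiN N φ 0 = φ ⟨0, h0lt⟩ := phiN_lt φ h0lt
  constructor
  · intro t β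
    have hkey := hkeyall (β : ℕ) (by omega) t
    rw [hphi0, phiN_lt φ β.isLt] at hkey
    simpa [evP, Fin.eta] using hkey
  · intro t
    have hkey := hkeyall (N - 1) le_rfl t
    rw [hphi0, phiN_ge φ (lt_irrefl _)] at hkey
    rw [Finset.sum_range_succ, sigmaC_diag] at hkey
    have h1 : evP h 1 t = 1 := by simp [evP]
    rw [h1, one_mul] at hkey
    simp only [evP] at hkey
    simp only [Pi.zero_apply] at hkey
    linear_combination -hkey

end
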